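/- Let K be a nonempty closed subset of ℝⁿ. The exoskeleton exo(K), consisting of those y ∈ ℝⁿ for which argmin_{x ∈ K} ‖y − x‖₂² is not a singleton, is a Lebesgue null set; in particular the metric projection onto K is uniquely defined for Lebesgue almost all y ∈ ℝⁿ. -/
import Mathlib


open MeasureTheory Metric

/-- If the distance function to `K` is differentiable at `y`, and `x` is a nearest point of `K`
to `y`, then the derivative evaluated at `x - y` equals `-infDist y K`. -/
lemma fderiv_infDist_eval {n : ℕ} {K : Set (EuclideanSpace ℝ (Fin n))}
    {y : EuclideanSpace ℝ (Fin n)}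
    (hd : DifferentiableAt ℝ (fun z => infDist z K) y)
    {x : EuclideanSpace ℝ (Fin n)} (hxK : x ∈ K) (hx : dist y x = infDist y K) :
    fderiv ℝ (fun z => infDist z K) y (x - y) = -(infDist y K) := by
  set f : EuclideanSpace ℝ (Fin n) → ℝ := fun z => infDist z K with hf
  set d : ℝ := infDist y K with hdd
  set v : EuclideanSpace ℝ (Fin n) := x - y with hv
  -- the curve t ↦ y + t ' v
  have hcurve : HasDerivAt (fun t : ℝ => y + t • v) v 0 :=
    ((hasDerivAt_id (0:ℝ)).smul_const v).const_add y |>.congr_deriv (one_smul ℝ v)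
  have hg : HasDerivAt (fun t : ℝ => f (y + t • v)) (fderiv ℝ f y v) 0 := by
    have hfd : HasFDerivAt f (fderiv ℝ f y) (y + (0:ℝ) • v) := by
      simpa using hd.hasFDerivAt
    exact hfd.comp_hasDerivAt 0 hcurve
  -- on [0,1], f (y + t•v) = d - t*d
  have hval : ∀ t ∈ Set.Icc (0:ℝ) 1, f (y + t • v) = d - t * d := by
    intro t ht
    have h1 : f (y + t • v) ≤ (1 - t) * d := by
      have : dist (y + t • v) x = (1 - t) * d := by
        rw [dist_eq_norm, ← hx, dist_eq_norm]
        have : y + t • v - x = (1 - t) • (y - x) := by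
          simp only [hv]; module
        rw [this, norm_smul, Real.norm_eq_abs, abs_of_nonneg (by linarith [ht.2])]
      calc f (y + t • v) ≤ dist (y + t • v) x := infDist_le_dist_of_mem hxK
        _ = (1 - t) * d := this
    have h2 : d - t * d ≤ f (y + t • v) := by
      have hlip : d ≤ f (y + t • v) + dist y (y + t • v) := infDist_le_infDist_add_dist
      have : dist y (y + t • v) = t * d := by
        rw [dist_eq_norm]
        have : y - (y + t • v) = (-t) • (x - y) := by simp only [hv]; module
        rw [this, norm_smul, Real.norm_eq_abs, abs_neg, abs_of_nonneg ht.1, ← dist_eq_norm,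
          dist_comm, hx]
      linarith [hlip, this ▸ hlip]
    nlinarith [h1, h2]
  -- hence the derivative within Icc 0 1 is -d
  have haff : HasDerivWithinAt (fun t : ℝ => f (y + t • v)) (-d) (Set.Icc (0:ℝ) 1) 0 := by
    have h0 : HasDerivWithinAt (fun t : ℝ => d - t * d) (-d) (Set.Icc (0:ℝ) 1) 0 := by
      simpa using (((hasDerivAt_id (0:ℝ)).mul_const d).const_sub d).hasDerivWithinAt
        (s := Set.Icc (0:ℝ) 1)
    refine h0.congr (fun t ht => hval t ht) ?_
    simpa using hval 0 ⟨le_refl 0, zero_le_one⟩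
  have hud : UniqueDiffWithinAt ℝ (Set.Icc (0:ℝ) 1) 0 :=
    (uniqueDiffOn_Icc one_pos) 0 (by simp)
  have := (hg.hasDerivWithinAt (s := Set.Icc (0:ℝ) 1)).derivWithin hud
  rw [← this, haff.derivWithin hud]

/-- **The exoskeleton is a Lebesgue null set.**
For a nonempty closed set `K ⊆ ℝⁿ`, the set of points `y` whose metric projection onto `K`
(the set of minimizers of the distance to `K`) is not a singleton has Lebesgue measure zero;
in particular the metric projection is uniquely defined for Lebesgue almost all `y`. -/
theorem exoskeleton_null
    (n : ℕ) (K : Set (EuclideanSpace ℝ (Fin n)))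
    (hne : K.Nonempty) (hcl : IsClosed K) :
    volume {y : EuclideanSpace ℝ (Fin n) |
      ¬ ∃! x, x ∈ K ∧ dist y x = infDist y K} = 0 := by
  set f : EuclideanSpace ℝ (Fin n) → ℝ := fun z => infDist z K with hf
  have hlip : LipschitzWith 1 f := lipschitz_infDist_pt K
  have hnull : volume {y : EuclideanSpace ℝ (Fin n) | ¬ DifferentiableAt ℝ f y} = 0 := by
    have := hlip.ae_differentiableAt (μ := volume)
    rwa [ae_iff] at this
  refine measure_mono_null (fun y hy => ?_) hnull
  simp only [Set.mem_setOf_eq] at hy ⊢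
  intro hdiff
  apply hy
  obtain ⟨x, hxK, hxd⟩ := hcl.exists_infDist_eq_dist hne y
  refine ⟨x, ⟨hxK, hxd.symm⟩, ?_⟩
  rintro x' ⟨hx'K, hx'd⟩
  -- both nearest points: show x' = x via the derivative
  set d : ℝ := infDist y K with hdd
  set L := fderiv ℝ f y with hL
  have e1 : L (x - y) = -d := fderiv_infDist_eval hdiff hxK hxd.symm
  have e2 : L (x' - y) = -d := fderiv_infDist_eval hdiff hx'K hx'd
  have hLnorm : ‖L‖ ≤ 1 := by
    simpa using norm_fderiv_le_of_lipschitz ℝ hlip (x₀ := y)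
  have hn1 : ‖x - y‖ = d := by rw [← dist_eq_norm, dist_comm, ← hxd]
  have hn2 : ‖x' - y‖ = d := by rw [← dist_eq_norm, dist_comm]; exact hx'd
  have key : ‖(x - y) + (x' - y)‖ = ‖x - y‖ + ‖x' - y‖ := by
    have hub : ‖(x - y) + (x' - y)‖ ≤ 2 * d := by
      calc ‖(x - y) + (x' - y)‖ ≤ ‖x - y‖ + ‖x' - y‖ := norm_add_le _ _
        _ = 2 * d := by rw [hn1, hn2]; ring
    have hlb : 2 * d ≤ ‖(x - y) + (x' - y)‖ := by
      have : L ((x - y) + (x' - y)) = -(2 * d) := by rw [map_add, e1, e2]; ring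
      have h1 : |L ((x - y) + (x' - y))| ≤ ‖L‖ * ‖(x - y) + (x' - y)‖ :=
        L.le_opNorm _
      have h2 : ‖L‖ * ‖(x - y) + (x' - y)‖ ≤ 1 * ‖(x - y) + (x' - y)‖ :=
        mul_le_mul_of_nonneg_right hLnorm (norm_nonneg _)
      rw [this, abs_neg] at h1
      have hd0 : 0 ≤ d := hdd ▸ infDist_nonneg
      calc 2 * d = |2 * d| := (abs_of_nonneg (by linarith)).symm
        _ ≤ ‖L‖ * ‖(x - y) + (x' - y)‖ := h1
        _ ≤ ‖(x - y) + (x' - y)‖ := by linarith [h2]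
    rw [hn1, hn2]; linarith
  have hsr : SameRay ℝ (x - y) (x' - y) := sameRay_iff_norm_add.mpr key
  have : x - y = x' - y := ((sameRay_iff_of_norm_eq (by rw [hn1, hn2])).mp hsr)
  exact (sub_left_inj.mp this).symm
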